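/- Let G be an inverse semigroup, H' ⊆ G a finite sub-inverse semigroup, and A a G-algebra. The relation on G_H defined by g ≡ h if and only if there exists t ∈ H with g·t = h is an equivalence relation on G_H. -/

import Mathlib

/-! Common setup: inverse semigroups, G-algebras, and the universal *-algebra 𝔽(G,A). -/

noncomputable section

/-- An inverse semigroup: a semigroup in which every element `g` has a unique
generalized inverse, denoted `star g`. -/
class InverseSemigroup (G : Type*) extends Semigroup G, Star G where
  mul_star_mul_self : ∀ g : G, g * star g * g = g
  star_mul_self_mul_star : ∀ g : G, star g * g * star g = star g
  star_unique : ∀ g h : G, g * h * g = g → h * g * h = h → h = star g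

namespace Green

/-! ### The free complex *-algebra on a set of generators

The free complex *-algebra on a set `Y` is realized as the monoid algebra of the free
monoid on the letters `Y × Bool` (a generator together with a formal star flag); its star
operation conjugates coefficients, reverses words and flips the star flags. -/

/-- The free complex *-algebra on the set `Y`. -/
abbrev FreeStar (Y : Type*) := MonoidAlgebra ℂ (FreeMonoid (Y × Bool))

namespace FreeStar

variable {Y : Type*}

/-- Star of a word: reverse it and flip all star flags. -/
def wordStar (w : FreeMonoid (Y × Bool)) : FreeMonoid (Y × Bool) :=
  FreeMonoid.ofList (((FreeMonoid.toList w).map fun x => (x.1, !x.2)).reverse)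

lemma wordStar_mul (v w : FreeMonoid (Y × Bool)) :
    wordStar (v * w) = wordStar w * wordStar v := by
  simp [wordStar, FreeMonoid.toList_mul]

lemma wordStar_wordStar (w : FreeMonoid (Y × Bool)) : wordStar (wordStar w) = w := by
  simp [wordStar, List.map_reverse, List.map_map, Function.comp_def]

/-- The star operation on the free complex *-algebra, as an additive map. -/
def starAux : FreeStar Y →+ FreeStar Y :=
  MonoidAlgebra.coeffAddEquiv.symm.toAddMonoidHom.comp
    (((Finsupp.mapDomain.addMonoidHom wordStar).comp
      (Finsupp.mapRange.addMonoidHom (starRingEnd ℂ).toAddMonoidHom)).comp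
      MonoidAlgebra.coeffAddEquiv.toAddMonoidHom)

lemma starAux_apply (f : FreeStar Y) :
    starAux f = MonoidAlgebra.ofCoeff
      (Finsupp.mapDomain wordStar (Finsupp.mapRange (starRingEnd ℂ) (map_zero _) f.coeff)) :=
  rfl

lemma starAux_single (w : FreeMonoid (Y × Bool)) (c : ℂ) :
    starAux (MonoidAlgebra.single w c) = MonoidAlgebra.single (wordStar w) (starRingEnd ℂ c) := by
  rw [starAux_apply]
  simp only [MonoidAlgebra.single, MonoidAlgebra.coeff_ofCoeff, Finsupp.mapRange_single,
    Finsupp.mapDomain_single]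

instance instStarRing : StarRing (FreeStar Y) where
  star := starAux
  star_involutive := by
    intro f
    induction f using MonoidAlgebra.induction_linear with
    | zero => simp
    | add f g hf hg => simp_all [map_add]
    | single w c => simp [starAux_single, wordStar_wordStar, starRingEnd_self_apply]
  star_mul := by
    intro f g
    show starAux (f * g) = starAux g * starAux f
    induction f using MonoidAlgebra.induction_linear with
    | zero => simp
    | add f f' hf hf' => simp [mul_add, add_mul, map_add, hf, hf']
    | single w c =>
      induction g using MonoidAlgebra.induction_linear with
      | zero => simp
      | add g g' hg hg' => simp [mul_add, add_mul, map_add, hg, hg']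
      | single v d =>
        simp only [MonoidAlgebra.single_mul_single, starAux_single, wordStar_mul, map_mul]
        rw [mul_comm]
  star_add := map_add _

end FreeStar

section GAlgebra

variable {G : Type*} [InverseSemigroup G]
variable {A : Type*} [NonUnitalNormedRing A] [StarRing A] [CStarRing A] [NormedSpace ℂ A]
  [IsScalarTower ℂ A A] [SMulCommClass ℂ A A] [StarModule ℂ A] [CompleteSpace A]

/-- `α` is an action of the inverse semigroup `G` on the C*-algebra `A` making it a
`G`-algebra: a semigroup homomorphism `G → End(A)` into the *-endomorphisms of `A` such
that `g g*(a)·b = a·g g*(b)` for all `a b : A` and `g : G`. -/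
structure IsGAlgebra (α : G → A →⋆ₙₐ[ℂ] A) : Prop where
  map_mul : ∀ g h : G, α (g * h) = (α g).comp (α h)
  central : ∀ (g : G) (a b : A), α (g * star g) a * b = a * α (g * star g) b

variable (α : G → A →⋆ₙₐ[ℂ] A)

/-- The generator of the free *-algebra corresponding to `a ∈ A`. -/
def genA (a : A) : FreeStar (A ⊕ G) := MonoidAlgebra.single (FreeMonoid.of (Sum.inl a, false)) 1

/-- The generator of the free *-algebra corresponding to `g ∈ G`. -/
def genG (g : G) : FreeStar (A ⊕ G) := MonoidAlgebra.single (FreeMonoid.of (Sum.inr g, false)) 1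

/-- The defining relations of `𝔽(G,A)`: the *-algebra relations of `A` are respected, the
multiplication and involution of `G` are respected, and `g(a)·g g* = g·a·g*`,
`[g g*, a] = 0` hold; the relation is moreover closed under `star`, so that the ideal
generated by it is a two-sided *-ideal. -/
inductive Rel : FreeStar (A ⊕ G) → FreeStar (A ⊕ G) → Prop
  | add_A (a b : A) : Rel (genA (G := G) (a + b)) (genA a + genA b)
  | smul_A (c : ℂ) (a : A) : Rel (genA (G := G) (c • a)) (c • genA a)
  | mul_A (a b : A) : Rel (genA (G := G) (a * b)) (genA a * genA b)
  | star_A (a : A) : Rel (genA (G := G) (star a)) (star (genA a))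
  | mul_G (g h : G) : Rel (genG (A := A) (g * h)) (genG g * genG h)
  | star_G (g : G) : Rel (genG (A := A) (star g)) (star (genG g))
  | act (g : G) (a : A) :
      Rel (genA (α g a) * genG g * genG (star g)) (genG g * genA a * genG (star g))
  | comm (g : G) (a : A) :
      Rel (genG g * genG (star g) * genA a) (genA a * genG g * genG (star g))
  | star_cl {x y} : Rel x y → Rel (star x) (star y)

/-- The universal *-algebra `𝔽(G,A)`: the quotient of the free complex *-algebra on the
set `A ⊔ G` by the two-sided *-ideal generated by the defining relations. -/
abbrev F := RingQuot (Rel α)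

instance : StarRing (F α) := RingQuot.starRing _ (fun _ _ h => Rel.star_cl h)

/-- The canonical copy of `a ∈ A` inside `𝔽(G,A)`. -/
def ιA (a : A) : F α := RingQuot.mkAlgHom ℂ (Rel α) (genA a)

/-- The canonical copy of `g ∈ G` inside `𝔽(G,A)`. -/
def ιG (g : G) : F α := RingQuot.mkAlgHom ℂ (Rel α) (genG g)

/-- The element `e₀(1-e₁)⋯(1-eₙ)` of `𝔽(G,A)` (product expanded multiplicatively),
given `e₀` and the list `[e₁, …, eₙ]`. -/
def elemP (e₀ : G) (l : List G) : F α :=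
  l.foldl (fun p e => p - p * ιG α e) (ιG α e₀)

/-- The element `g·e₀(1-e₁)⋯(1-eₙ)` of `𝔽(G,A)`. -/
def elemGE (g e₀ : G) (l : List G) : F α := ιG α g * elemP α e₀ l

/-- The set `E(G)` of projections `e₀(1-e₁)⋯(1-eₙ)` in `𝔽(G,A)`, with `e₀, …, eₙ`
idempotents of `G`. -/
def EG : Set (F α) :=
  {x | ∃ (e₀ : G) (l : List G), e₀ * e₀ = e₀ ∧ (∀ e ∈ l, e * e = e) ∧ x = elemP α e₀ l}

/-- The inverse semigroup `G_E = {g·p | g ∈ G, p ∈ E(G)}` inside `𝔽(G,A)`. -/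
def GE : Set (F α) :=
  {x | ∃ (g e₀ : G) (l : List G),
    e₀ * e₀ = e₀ ∧ (∀ e ∈ l, e * e = e) ∧ x = elemGE α g e₀ l}

/-- The extension of the `G`-action along a list: `(id - α e₁)∘⋯∘(id - α eₙ)`. -/
def actL : List G → A → A
  | [] => id
  | e :: l => fun a => actL l a - α e (actL l a)

/-- The extension of the `G`-action to `E(G)`:
`α_{e₀(1-e₁)⋯(1-eₙ)} = α_{e₀}∘(id - α_{e₁})∘⋯∘(id - α_{eₙ})`. -/
def actP (e₀ : G) (l : List G) : A → A := fun a => α e₀ (actL α l a)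

/-- The extension of the `G`-action to `G_E`: `α_{g·p} = α_g ∘ α_p`. -/
def actGE (g e₀ : G) (l : List G) : A → A := fun a => α g (actP α e₀ l a)

/-- The action of `k* = (g·e₀(1-e₁)⋯(1-eₙ))* = g*·(g e₀ g*)(1 - g e₁ g*)⋯(1 - g eₙ g*)`,
for `k = g·e₀(1-e₁)⋯(1-eₙ) ∈ G_E`. -/
def actStar (g e₀ : G) (l : List G) : A → A :=
  fun a => α (star g) (actP α (g * e₀ * star g) (l.map fun e => g * e * star g) a)

/-- The subalgebra `A_{k k*} = α_{k k*}(A) = (α_k ∘ α_{k*})(A)`,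
for `k = g·e₀(1-e₁)⋯(1-eₙ) ∈ G_E`. -/
def carrier (g e₀ : G) (l : List G) : Set A :=
  Set.range fun a => actGE α g e₀ l (actStar α g e₀ l a)

/-- `S` is a sub-inverse semigroup of `G`: a subset closed under multiplication and
involution. -/
structure IsSubInvSemigroup (S : Set G) : Prop where
  mul_mem : ∀ {a b : G}, a ∈ S → b ∈ S → a * b ∈ S
  star_mem : ∀ {a : G}, a ∈ S → star a ∈ S

variable (S : Set G)

/-- The set `E(H')` of projections `e₀(1-e₁)⋯(1-eₙ)` with `e₀, …, eₙ` idempotents of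
`H' = S`. -/
def EH : Set (F α) :=
  {x | ∃ (e₀ : G) (l : List G), (e₀ ∈ S ∧ e₀ * e₀ = e₀) ∧ (∀ e ∈ l, e ∈ S ∧ e * e = e) ∧
    x = elemP α e₀ l}

/-- `H⁽⁰⁾`: the set of nonzero minimal projections of `E(H')`
(where `q ≤ p` means `q p = q`). -/
def H0 : Set (F α) :=
  {p | p ∈ EH α S ∧ p ≠ 0 ∧ ∀ q ∈ EH α S, q ≠ 0 → q * p = q → q = p}

/-- The groupoid `H = {t·e | t ∈ H', e ∈ H⁽⁰⁾} \ {0}` associated to `H'`. -/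
def Hgpd : Set (F α) :=
  {x | x ≠ 0 ∧ ∃ t ∈ S, ∃ e ∈ H0 α S, x = ιG α t * e}

/-- `G_H = {g·e | g ∈ G, e ∈ H⁽⁰⁾, g* g ≥ e} \ {0}`. -/
def GH : Set (F α) :=
  {x | x ≠ 0 ∧ ∃ (g : G), ∃ e ∈ H0 α S, x = ιG α g * e ∧ e * ιG α (star g * g) = e}

/-- The relation `≡` on `G_H`: `g ≡ h` iff `g t = h` for some `t ∈ H`. -/
def equivH (x y : F α) : Prop := ∃ t ∈ Hgpd α S, x * t = y

end GAlgebra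

/-- For an assertion `P`, the scalar `[P]` which is `1` if `P` is true and `0` if `P`
is false. -/
def ind (P : Prop) : ℂ := @ite _ P (Classical.propDecidable P) 1 0

end Green

/-! The projections of `E(H')` commute and are idempotent, since they lie in the monoid
generated by the pairwise commuting idempotents `g` and `1 - g` (`g ∈ G₀`, commuting because
idempotents of an inverse semigroup commute); `E(H')` is closed under products and under
conjugation `p ↦ u p u*` by `u ∈ H'`. For symmetry and transitivity, the witness built from
the given ones carries an extra projection `q ∈ E(H')` next to a minimal `e ∈ H⁽⁰⁾`; as the
elements involved are nonzero, `q e ≠ 0`, and minimality absorbs it: `q e = e`. -/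

namespace InverseSemigroup

variable {G : Type*} [InverseSemigroup G]

lemma star_star (g : G) : star (star g) = g :=
  (star_unique (star g) g (star_mul_self_mul_star g) (mul_star_mul_self g)).symm

lemma mul_star_mul_self_assoc (g : G) : g * (star g * g) = g := by
  rw [← mul_assoc, mul_star_mul_self]

lemma isIdempotentElem_star_mul_self (g : G) : IsIdempotentElem (star g * g) := by
  rw [IsIdempotentElem, ← mul_assoc, star_mul_self_mul_star]

lemma isIdempotentElem_mul_star_self (g : G) : IsIdempotentElem (g * star g) := by
  rw [IsIdempotentElem, ← mul_assoc, mul_star_mul_self]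

lemma star_eq_self_of_isIdempotentElem {e : G} (he : IsIdempotentElem e) : star e = e :=
  (star_unique e e (by rw [he.eq, he.eq]) (by rw [he.eq, he.eq])).symm

/-- `f (e f)* e` is an idempotent inverse of `e f`, so `(e f)*`, and hence `e f`, is
idempotent. -/
lemma isIdempotentElem_mul {e f : G} (he : IsIdempotentElem e) (hf : IsIdempotentElem f) :
    IsIdempotentElem (e * f) := by
  set x := f * (star (e * f) * e)
  have hinv : star (e * f) = x := by
    refine (star_unique (e * f) x ?_ ?_).symm
    · simp only [x, mul_assoc]
      rw [he.mul_self_mul, hf.mul_self_mul, ← mul_assoc e f, mul_star_mul_self_assoc]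
    · simp only [x, mul_assoc]
      rw [he.mul_self_mul, hf.mul_self_mul, ← mul_assoc e f, ← mul_assoc (star (e * f)),
        ← mul_assoc (star (e * f) * (e * f)), star_mul_self_mul_star]
  have hx : IsIdempotentElem x := by
    simp only [IsIdempotentElem, x, mul_assoc]
    rw [← mul_assoc e f, ← mul_assoc (star (e * f)),
      ← mul_assoc (star (e * f) * (e * f)), star_mul_self_mul_star]
  have hstar : IsIdempotentElem (star (e * f)) := hinv ▸ hx
  rw [← star_star (e * f), star_eq_self_of_isIdempotentElem hstar]
  exact hstar

lemma commute_of_isIdempotentElem {e f : G} (he : IsIdempotentElem e)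
    (hf : IsIdempotentElem f) : Commute e f := by
  have hfe : star (e * f) = f * e := by
    refine (star_unique (e * f) (f * e) ?_ ?_).symm
    · simp only [mul_assoc]
      rw [he.mul_self_mul, hf.mul_self_mul, ← mul_assoc e f, (isIdempotentElem_mul he hf).eq]
    · simp only [mul_assoc]
      rw [he.mul_self_mul, hf.mul_self_mul, ← mul_assoc f e, (isIdempotentElem_mul hf he).eq]
  rw [Commute, SemiconjBy, ← hfe,
    star_eq_self_of_isIdempotentElem (isIdempotentElem_mul he hf)]

lemma isIdempotentElem_conj (u : G) {e : G} (he : IsIdempotentElem e) :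
    IsIdempotentElem (u * e * star u) := by
  simp only [IsIdempotentElem, mul_assoc]
  rw [← mul_assoc (star u) u, ← mul_assoc (star u * u) e,
    (commute_of_isIdempotentElem (isIdempotentElem_star_mul_self u) he).eq, mul_assoc e,
    star_mul_self_mul_star, he.mul_self_mul]

end InverseSemigroup

namespace Green

open InverseSemigroup

section Projections

variable {G : Type*} [InverseSemigroup G]
variable {A : Type*} [NonUnitalNormedRing A] [StarRing A] [NormedSpace ℂ A]
variable (α : G → A →⋆ₙₐ[ℂ] A)

lemma ιG_mul (g h : G) : ιG α (g * h) = ιG α g * ιG α h := by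
  rw [ιG, ιG, ιG, ← map_mul]
  exact RingQuot.mkAlgHom_rel ℂ (Rel.mul_G g h)

lemma isIdempotentElem_ιG {e : G} (he : IsIdempotentElem e) : IsIdempotentElem (ιG α e) := by
  rw [IsIdempotentElem, ← ιG_mul, he.eq]

lemma commute_ιG {e f : G} (h : Commute e f) : Commute (ιG α e) (ιG α f) := by
  rw [Commute, SemiconjBy, ← ιG_mul, ← ιG_mul, h.eq]

def projGens : Set (F α) :=
  {x | ∃ e : G, IsIdempotentElem e ∧ (x = ιG α e ∨ x = 1 - ιG α e)}

def projSubmonoid : Submonoid (F α) := Submonoid.closure (projGens α)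

variable {α}

lemma projGens_commute {x y : F α} (hx : x ∈ projGens α) (hy : y ∈ projGens α) :
    Commute x y := by
  obtain ⟨e, he, rfl | rfl⟩ := hx <;> obtain ⟨f, hf, rfl | rfl⟩ := hy <;>
    have h := commute_ιG α (commute_of_isIdempotentElem he hf)
  · exact h
  · exact (Commute.one_right _).sub_right h
  · exact (Commute.one_left _).sub_left h
  · exact (Commute.one_left _).sub_left ((Commute.one_right _).sub_right h)

lemma projSubmonoid_commute {x y : F α} (hx : x ∈ projSubmonoid α)
    (hy : y ∈ projSubmonoid α) : Commute x y :=
  Set.centralizer_centralizer_comm_of_comm (fun _ ha _ hb => (projGens_commute ha hb).eq)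
    x (Submonoid.closure_le_centralizer_centralizer _ hx)
    y (Submonoid.closure_le_centralizer_centralizer _ hy)

lemma isIdempotentElem_of_mem_projSubmonoid {x : F α} (hx : x ∈ projSubmonoid α) :
    IsIdempotentElem x := by
  induction hx using Submonoid.closure_induction with
  | mem x hx =>
    obtain ⟨e, he, rfl | rfl⟩ := hx
    · exact isIdempotentElem_ιG α he
    · exact (isIdempotentElem_ιG α he).one_sub
  | one => exact IsIdempotentElem.one
  | mul x y hx hy ihx ihy => exact ihx.mul_of_commute (projSubmonoid_commute hx hy) ihy

lemma ιG_mem_projSubmonoid {e : G} (he : IsIdempotentElem e) : ιG α e ∈ projSubmonoid α :=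
  Submonoid.subset_closure ⟨e, he, .inl rfl⟩

lemma elemP_concat (a e : G) (l : List G) :
    elemP α a (l ++ [e]) = elemP α a l - elemP α a l * ιG α e :=
  List.foldl_concat ..

lemma elemP_mem_projSubmonoid {a : G} {l : List G} (ha : IsIdempotentElem a)
    (hl : ∀ e ∈ l, IsIdempotentElem e) : elemP α a l ∈ projSubmonoid α := by
  induction l using List.reverseRecOn with
  | nil => exact ιG_mem_projSubmonoid ha
  | append_singleton l e ih =>
    have he := hl e (by simp)
    rw [elemP_concat, ← mul_one_sub]
    exact mul_mem (ih fun f hf => hl f (by simp [hf]))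
      (Submonoid.subset_closure ⟨e, he, .inr rfl⟩)

lemma elemP_mul_ιG {a b : G} {l : List G} (hb : IsIdempotentElem b)
    (hl : ∀ e ∈ l, IsIdempotentElem e) : elemP α a l * ιG α b = elemP α (a * b) l := by
  induction l using List.reverseRecOn with
  | nil => exact (ιG_mul α a b).symm
  | append_singleton l e ih =>
    have hbe := commute_ιG α (commute_of_isIdempotentElem hb (hl e (by simp)))
    rw [elemP_concat, elemP_concat, ← ih fun f hf => hl f (by simp [hf]), sub_mul, mul_assoc,
      ← hbe.eq, ← mul_assoc]

lemma elemP_mul {a b : G} {l m : List G} (hb : IsIdempotentElem b)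
    (hl : ∀ e ∈ l, IsIdempotentElem e) :
    elemP α a l * elemP α b m = elemP α (a * b) (l ++ m) := by
  induction m using List.reverseRecOn with
  | nil => rw [List.append_nil]; exact elemP_mul_ιG hb hl
  | append_singleton m e ih =>
    rw [elemP_concat, ← List.append_assoc, elemP_concat, ← ih, mul_sub, mul_assoc]

section Conjugation

variable {u : G} {p : F α}

lemma conj_mul_ιG (hp : Commute p (ιG α (star u * u))) :
    ιG α u * p * ιG α (star u) * ιG α u = ιG α u * p := by
  rw [mul_assoc _ (ιG α (star u)), ← ιG_mul, mul_assoc, hp.eq, ← mul_assoc, ← ιG_mul,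
    mul_star_mul_self_assoc]

lemma ιG_star_mul_conj (hp : Commute p (ιG α (star u * u))) :
    ιG α (star u) * (ιG α u * p * ιG α (star u)) = p * ιG α (star u) := by
  rw [← mul_assoc, ← mul_assoc, ← ιG_mul, ← hp.eq, mul_assoc, ← ιG_mul,
    star_mul_self_mul_star]

end Conjugation

lemma conj_elemP (u : G) {a : G} {l : List G} (ha : IsIdempotentElem a)
    (hl : ∀ e ∈ l, IsIdempotentElem e) :
    ιG α u * elemP α a l * ιG α (star u)
      = elemP α (u * a * star u) (l.map fun e => u * e * star u) := by
  induction l using List.reverseRecOn with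
  | nil => rw [List.map_nil, elemP, elemP, List.foldl_nil, List.foldl_nil, ιG_mul, ιG_mul]
  | append_singleton l e ih =>
    have hl' : ∀ f ∈ l, IsIdempotentElem f := fun f hf => hl f (by simp [hf])
    have hP : Commute (elemP α a l) (ιG α (star u * u)) :=
      projSubmonoid_commute (elemP_mem_projSubmonoid ha hl')
        (ιG_mem_projSubmonoid (isIdempotentElem_star_mul_self u))
    rw [List.map_append, List.map_singleton, elemP_concat, elemP_concat, ← ih hl', ιG_mul,
      ιG_mul, ← mul_assoc (ιG α u * _ * _), ← mul_assoc (ιG α u * _ * _), conj_mul_ιG hP]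
    simp only [mul_sub, sub_mul, mul_assoc]

section EH

variable (S : Set G)

lemma EH_subset_projSubmonoid : EH α S ⊆ projSubmonoid α := by
  rintro _ ⟨a, l, ⟨-, ha⟩, hl, rfl⟩
  exact elemP_mem_projSubmonoid ha fun e he => (hl e he).2

variable {S} {p q : F α}

lemma commute_of_mem_EH (hp : p ∈ EH α S) (hq : q ∈ EH α S) : Commute p q :=
  projSubmonoid_commute (EH_subset_projSubmonoid S hp) (EH_subset_projSubmonoid S hq)

lemma commute_ιG_of_mem_EH (hp : p ∈ EH α S) {f : G} (hf : IsIdempotentElem f) :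
    Commute p (ιG α f) :=
  projSubmonoid_commute (EH_subset_projSubmonoid S hp) (ιG_mem_projSubmonoid hf)

lemma isIdempotentElem_of_mem_EH (hp : p ∈ EH α S) : IsIdempotentElem p :=
  isIdempotentElem_of_mem_projSubmonoid (EH_subset_projSubmonoid S hp)

lemma mul_mem_EH (hS : IsSubInvSemigroup S) (hp : p ∈ EH α S) (hq : q ∈ EH α S) :
    p * q ∈ EH α S := by
  obtain ⟨a, l, ⟨haS, ha⟩, hl, rfl⟩ := hp
  obtain ⟨b, m, ⟨hbS, hb⟩, hm, rfl⟩ := hq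
  exact ⟨a * b, l ++ m, ⟨hS.mul_mem haS hbS, isIdempotentElem_mul ha hb⟩,
    fun e he => (List.mem_append.mp he).elim (hl e) (hm e),
    elemP_mul hb fun e he => (hl e he).2⟩

lemma conj_mem_EH (hS : IsSubInvSemigroup S) {u : G} (hu : u ∈ S) (hp : p ∈ EH α S) :
    ιG α u * p * ιG α (star u) ∈ EH α S := by
  obtain ⟨a, l, ⟨haS, ha⟩, hl, rfl⟩ := hp
  have hconj : ∀ {e}, e ∈ S → u * e * star u ∈ S := fun he =>
    hS.mul_mem (hS.mul_mem hu he) (hS.star_mem hu)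
  refine ⟨_, _, ⟨hconj haS, isIdempotentElem_conj u ha⟩, ?_,
    conj_elemP u ha fun e he => (hl e he).2⟩
  simp only [List.mem_map]
  rintro _ ⟨e, he, rfl⟩
  exact ⟨hconj (hl e he).1, isIdempotentElem_conj u (hl e he).2⟩

lemma star_conj_mem_EH (hS : IsSubInvSemigroup S) {u : G} (hu : u ∈ S) (hp : p ∈ EH α S) :
    ιG α (star u) * p * ιG α u ∈ EH α S := by
  simpa only [InverseSemigroup.star_star] using conj_mem_EH hS (hS.star_mem hu) hp

end EH

section H0

variable {S : Set G} (hS : IsSubInvSemigroup S)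
include hS

lemma mul_eq_of_mem_H0 {e q : F α} (he : e ∈ H0 α S) (hq : q ∈ EH α S) (hqe : q * e ≠ 0) :
    q * e = e :=
  he.2.2 _ (mul_mem_EH hS hq he.1) hqe ((isIdempotentElem_of_mem_EH he.1).mul_mul_self q)

/-- If `q ≤ u e u*` then `u* q u ≤ e`, and conjugating back recovers `q`; so minimality
of `e` transfers to `u e u*`. -/
lemma conj_mem_H0 {u : G} (hu : u ∈ S) {e : F α} (he : e ∈ H0 α S)
    (hr : ιG α u * e * ιG α (star u) ≠ 0) : ιG α u * e * ιG α (star u) ∈ H0 α S := by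
  have hcomm := commute_ιG_of_mem_EH he.1 (isIdempotentElem_star_mul_self u)
  refine ⟨conj_mem_EH hS hu he.1, hr, fun q hq hq0 hqr => ?_⟩
  have hqu : q * ιG α u = q * (ιG α u * e) := by
    conv_lhs => rw [← hqr]
    rw [mul_assoc, conj_mul_ιG hcomm]
  have hquu : q * ιG α (u * star u) = q := by
    rw [ιG_mul, ← mul_assoc, hqu]
    simpa only [mul_assoc] using hqr
  have hback : ιG α u * (ιG α (star u) * q * ιG α u) * ιG α (star u) = q := by
    calc _ = ιG α (u * star u) * q * ιG α (u * star u) := by simp only [ιG_mul, mul_assoc]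
      _ = q := by
        rw [← (commute_ιG_of_mem_EH hq (isIdempotentElem_mul_star_self u)).eq, hquu, hquu]
  have hq'e : ιG α (star u) * q * ιG α u * e = ιG α (star u) * q * ιG α u := by
    rw [mul_assoc (ιG α (star u)), mul_assoc (ιG α (star u)), mul_assoc q, ← hqu]
  have hq'0 : ιG α (star u) * q * ιG α u ≠ 0 := fun h =>
    hq0 (by rw [← hback, h, mul_zero, zero_mul])
  rw [← hback, he.2.2 _ (star_conj_mem_EH hS hu hq) hq'0 hq'e]

end H0

section Equivalence

variable {S : Set G} {x y z : F α}

lemma equivH_refl (hx : x ∈ GH α S) : equivH α S x x := by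
  obtain ⟨-, g, e, he, rfl, -⟩ := hx
  obtain ⟨a, l, ⟨haS, ha⟩, hl, rfl⟩ := he.1
  have hae : ιG α a * elemP α a l = elemP α a l := by
    have := elemP_mul (α := α) (a := a) (l := []) (m := l) ha (by simp)
    rwa [List.nil_append, ha] at this
  exact ⟨elemP α a l, ⟨he.2.1, a, haS, _, he, hae.symm⟩,
    (isIdempotentElem_of_mem_EH he.1).mul_mul_self _⟩

/-- The inverse of `t = u e'` is `u* r` with `r = u e' u*`; the minimality of `e` forces
`r e = e`, since `e r ≠ 0` because `y = g e u e' = g (e r) u`. -/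
lemma equivH_symm (hS : IsSubInvSemigroup S) (hx : x ∈ GH α S) (hy : y ≠ 0)
    (h : equivH α S x y) : equivH α S y x := by
  obtain ⟨_, ⟨-, u, hu, e', he', rfl⟩, rfl⟩ := h
  obtain ⟨hx0, g, e, he, rfl, -⟩ := hx
  have hcomm := commute_ιG_of_mem_EH he'.1 (isIdempotentElem_star_mul_self u)
  set r := ιG α u * e' * ιG α (star u)
  have hrEH : r ∈ EH α S := conj_mem_EH hS hu he'.1
  have hru : r * ιG α u = ιG α u * e' := conj_mul_ιG hcomm
  have hre : r * e = e := by
    refine mul_eq_of_mem_H0 hS he hrEH fun h0 => hy ?_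
    rw [← hru, ← mul_assoc, mul_assoc _ e, (commute_of_mem_EH he.1 hrEH).eq, h0, mul_zero,
      zero_mul]
  have hts : ιG α u * e' * (ιG α (star u) * r) = r := by
    rw [ιG_star_mul_conj hcomm, ← mul_assoc, (isIdempotentElem_of_mem_EH he'.1).mul_mul_self]
  have hys : ιG α g * e * (ιG α u * e') * (ιG α (star u) * r) = ιG α g * e := by
    rw [mul_assoc, hts, mul_assoc, (commute_of_mem_EH he.1 hrEH).eq, hre]
  have hr0 : r ≠ 0 := fun h0 => he.2.1 (by rw [← hre, h0, zero_mul])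
  exact ⟨ιG α (star u) * r, ⟨fun h0 => hx0 (by rw [← hys, h0, mul_zero]), star u,
    hS.star_mem hu, r, conj_mem_H0 hS hu he' hr0, rfl⟩, hys⟩

/-- Moving `v` past `e` turns `(u e)(v f)` into `(u v)(v* e v) f`, and `(v* e v) f = f` by
minimality of `f`. -/
lemma equivH_trans (hS : IsSubInvSemigroup S) (hz : z ≠ 0) (h : equivH α S x y)
    (h' : equivH α S y z) : equivH α S x z := by
  obtain ⟨_, ⟨-, u, hu, e, he, rfl⟩, rfl⟩ := h
  obtain ⟨_, ⟨-, v, hv, f, hf, rfl⟩, rfl⟩ := h'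
  set c := ιG α (star v) * e * ιG α v
  have hcomm : Commute e (ιG α (star (star v) * star v)) := by
    rw [InverseSemigroup.star_star]
    exact commute_ιG_of_mem_EH he.1 (isIdempotentElem_mul_star_self v)
  have hev : ιG α v * c = e * ιG α v := by
    simpa only [InverseSemigroup.star_star] using ιG_star_mul_conj hcomm
  have htt : ιG α u * e * (ιG α v * f) = ιG α (u * v) * (c * f) := by
    rw [mul_assoc (ιG α u), ← mul_assoc e, ← hev, ιG_mul]
    simp only [mul_assoc]
  have hcf : c * f = f := by
    refine mul_eq_of_mem_H0 hS hf (star_conj_mem_EH hS hv he.1) fun h0 => hz ?_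
    rw [mul_assoc, htt, h0, mul_zero, mul_zero]
  exact ⟨ιG α u * e * (ιG α v * f), ⟨fun h0 => hz (by rw [mul_assoc, h0, mul_zero]), u * v,
    hS.mul_mem hu hv, f, hf, by rw [htt, hcf]⟩, (mul_assoc ..).symm⟩

end Equivalence

end Projections

theorem equivH_is_equivalence_general
    {G : Type*} [InverseSemigroup G]
    {A : Type*} [NonUnitalNormedRing A] [StarRing A] [NormedSpace ℂ A]
    (α : G → A →⋆ₙₐ[ℂ] A)
    (S : Set G) (hS : IsSubInvSemigroup S) :
    Equivalence (fun x y : {z : F α // z ∈ GH α S} => equivH α S x.1 y.1) :=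
  ⟨fun x => equivH_refl x.2, fun {x y} h => equivH_symm hS x.2 y.2.1 h,
    fun {_ _ z} h h' => equivH_trans hS z.2.1 h h'⟩

/-- Let `G` be an inverse semigroup, `H' = S ⊆ G` a finite sub-inverse
semigroup and `A` a `G`-algebra.  The relation on `G_H` defined by `g ≡ h` iff there
exists `t ∈ H` with `g·t = h` is an equivalence relation on `G_H`. -/
theorem equivH_is_equivalence
    {G : Type*} [InverseSemigroup G]
    {A : Type*} [NonUnitalNormedRing A] [StarRing A] [CStarRing A] [NormedSpace ℂ A]
    [IsScalarTower ℂ A A] [SMulCommClass ℂ A A] [StarModule ℂ A] [CompleteSpace A]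
    (α : G → A →⋆ₙₐ[ℂ] A) (hα : IsGAlgebra α)
    (S : Set G) (hS : IsSubInvSemigroup S) (hSfin : S.Finite) :
    Equivalence (fun x y : {z : F α // z ∈ GH α S} => equivH α S x.1 y.1) :=
  equivH_is_equivalence_general α S hS

end Green
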